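/- arXiv:2603.20787 — 7 statements merged into one kernel-verified Lean document; each statement's English description precedes it below -/
import Mathlib

section
/- Let M₁ →R T ←L M₂ be a cospan of finite groupoids. Then the Euler characteristic of the homotopy pullback satisfies χ(M₁ ×_T M₂) = Σ_{d ∈ π₀(T)} χ(M₁/d) · (1/|Aut_T(d)|) · χ(d\M₂), where the sum runs over a set of representatives d of the isomorphism classes of objects of T, M₁/d is the right homotopy fibre of R over d, and d\M₂ is the left homotopy fibre of L over d. -/
open CategoryTheory

noncomputable section

/-- The component set `π₀(C)`: isomorphism classes of objects of `C`. -/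
abbrev Pi0 (C : Type*) [Category C] := Quotient (isIsomorphicSetoid C)

/-- Groupoid cardinality (Euler characteristic): the sum, over a set of representatives of
the isomorphism classes of objects, of the reciprocals of the orders of the automorphism
groups. -/
noncomputable def gcard (C : Type*) [Category C] : ℚ :=
  ∑ᶠ x : Pi0 C, (Nat.card (Aut (Quotient.out x)) : ℚ)⁻¹

namespace GcardAux

instance isoFinite {C : Type*} [Category C] [∀ a b : C, Finite (a ⟶ b)] (a b : C) :
    Finite (a ≅ b) :=
  Finite.of_injective Iso.hom (fun _ _ h => Iso.ext h)

instance autFinite {C : Type*} [Category C] [∀ a b : C, Finite (a ⟶ b)] (a : C) :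
    Finite (Aut a) :=
  isoFinite a a

variable {C : Type*} [Category C]

/-- iso ≃ hom when every morphism is iso -/
def isoEquivHom' (hiso : ∀ {a b : C} (f : a ⟶ b), IsIso f) (a b : C) : (a ≅ b) ≃ (a ⟶ b) where
  toFun := Iso.hom
  invFun f := @asIso _ _ _ _ f (hiso f)
  left_inv f := Iso.ext rfl
  right_inv f := rfl

lemma pi0_eq_iff (hiso : ∀ {a b : C} (f : a ⟶ b), IsIso f) (a b : C) :
    (⟦a⟧ : Pi0 C) = ⟦b⟧ ↔ Nonempty (a ⟶ b) := by
  constructor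
  · intro h
    obtain ⟨e⟩ := Quotient.exact h
    exact ⟨e.hom⟩
  · rintro ⟨f⟩
    exact Quotient.sound ⟨@asIso _ _ _ _ f (hiso f)⟩

lemma iso_out (x : Pi0 C) (a : C) (h : (⟦a⟧ : Pi0 C) = x) : Nonempty (Quotient.out x ≅ a) := by
  subst h
  exact (Quotient.mk_out (s := isIsomorphicSetoid C) a : IsIsomorphic _ a)


theorem gcard_eq_sum_inv_card (hiso : ∀ {a b : C} (f : a ⟶ b), IsIso f)
    [Finite C] [∀ a b : C, Finite (a ⟶ b)] :
    gcard C = ∑ᶠ c : C, (Nat.card (Σ c' : C, c ⟶ c') : ℚ)⁻¹ := by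
  classical
  letI : Fintype C := Fintype.ofFinite C
  letI : ∀ a b : C, Fintype (a ⟶ b) := fun _ _ => Fintype.ofFinite _
  letI : Fintype (Pi0 C) := Fintype.ofFinite _
  have hcard : ∀ a b : C, Nonempty (a ⟶ b) →
      Nat.card (a ⟶ b) = Nat.card (Aut (Quotient.out (⟦a⟧ : Pi0 C))) := by
    intro a b h
    have hab : (⟦a⟧ : Pi0 C) = ⟦b⟧ := (pi0_eq_iff hiso a b).2 h
    obtain ⟨ea⟩ := iso_out (⟦a⟧ : Pi0 C) a rfl
    obtain ⟨eb⟩ := iso_out (⟦a⟧ : Pi0 C) b hab.symm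
    calc Nat.card (a ⟶ b)
        = Nat.card (Quotient.out (⟦a⟧ : Pi0 C) ⟶ Quotient.out (⟦a⟧ : Pi0 C)) :=
          Nat.card_congr (Iso.homCongr ea.symm eb.symm)
      _ = Nat.card (Aut (Quotient.out (⟦a⟧ : Pi0 C))) :=
          (Nat.card_congr (isoEquivHom' hiso _ _)).symm
  have hN : ∀ c : C, Nat.card (Σ c' : C, c ⟶ c') =
      (Finset.univ.filter fun c' : C => (⟦c'⟧ : Pi0 C) = ⟦c⟧).card *
        Nat.card (Aut (Quotient.out (⟦c⟧ : Pi0 C))) := by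
    intro c
    rw [Nat.card_eq_fintype_card, Fintype.card_sigma]
    have : ∀ c' : C, Fintype.card (c ⟶ c') =
        if (⟦c'⟧ : Pi0 C) = ⟦c⟧ then Nat.card (Aut (Quotient.out (⟦c⟧ : Pi0 C))) else 0 := by
      intro c'
      by_cases h : Nonempty (c ⟶ c')
      · rw [if_pos (((pi0_eq_iff hiso c c').2 h).symm), ← Nat.card_eq_fintype_card, hcard c c' h]
      · rw [if_neg, Fintype.card_eq_zero_iff.mpr (not_nonempty_iff.1 h)]
        intro hh
        exact h ((pi0_eq_iff hiso c c').1 hh.symm)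
    rw [Finset.sum_congr rfl fun c' _ => this c']
    rw [Finset.sum_ite, Finset.sum_const, Finset.sum_const_zero, add_zero, smul_eq_mul]
  rw [gcard, finsum_eq_sum_of_fintype, finsum_eq_sum_of_fintype]
  symm
  rw [← Finset.sum_fiberwise_of_maps_to (g := fun c : C => (⟦c⟧ : Pi0 C))
    (fun c _ => Finset.mem_univ _) (fun c => (Nat.card (Σ c' : C, c ⟶ c') : ℚ)⁻¹)]
  refine Finset.sum_congr rfl fun x _ => ?_
  set k := (Finset.univ.filter fun c : C => (⟦c⟧ : Pi0 C) = x).card with hk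
  have hkpos : 0 < k := Finset.card_pos.2 ⟨Quotient.out x, by simp [Quotient.out_eq]⟩
  have hApos : 0 < Nat.card (Aut (Quotient.out x)) := Nat.card_pos
  have hterm : ∀ c ∈ Finset.univ.filter fun c : C => (⟦c⟧ : Pi0 C) = x,
      (Nat.card (Σ c' : C, c ⟶ c') : ℚ)⁻¹ = ((k : ℚ) * Nat.card (Aut (Quotient.out x)))⁻¹ := by
    intro c hc
    have hc' : (⟦c⟧ : Pi0 C) = x := (Finset.mem_filter.1 hc).2
    rw [hN c, hc']
    push_cast
    rfl
  rw [Finset.sum_congr rfl hterm, Finset.sum_const, nsmul_eq_mul, ← hk]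
  rw [mul_inv, ← mul_assoc, mul_inv_cancel₀ (by exact_mod_cast hkpos.ne'), one_mul]

section CommaFin

variable {A B D : Type*} [Category A] [Category B] [Category D] (R : A ⥤ D) (L : B ⥤ D)

instance commaFinite [Finite A] [Finite B] [∀ x y : D, Finite (x ⟶ y)] : Finite (Comma R L) :=
  Finite.of_injective
    (fun X => (⟨(X.left, X.right), X.hom⟩ : Σ p : A × B, (R.obj p.1 ⟶ L.obj p.2)))
    (by
      rintro ⟨l, r, h⟩ ⟨l', r', h'⟩ hh
      obtain ⟨h1, h2⟩ := Sigma.ext_iff.1 hh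
      injection h1 with hl hr
      subst hl; subst hr
      cases eq_of_heq h2
      rfl)

instance commaHomFinite [∀ x y : A, Finite (x ⟶ y)] [∀ x y : B, Finite (x ⟶ y)]
    (X Y : Comma R L) : Finite (X ⟶ Y) :=
  Finite.of_injective (fun m => (m.left, m.right))
    (by
      rintro ⟨ml, mr, mw⟩ ⟨ml', mr', mw'⟩ hh
      injection hh with h1 h2
      subst h1; subst h2
      rfl)

lemma isIso_comma_aux (hA : ∀ {x y : A} (g : x ⟶ y), IsIso g)
    (hB : ∀ {x y : B} (g : x ⟶ y), IsIso g) {X Y : Comma R L} (f : X ⟶ Y) : IsIso f := by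
  have h : f = (Comma.isoMk (@asIso _ _ _ _ f.left (hA _)) (@asIso _ _ _ _ f.right (hB _))
      f.w).hom := rfl
  rw [h]
  infer_instance

lemma isIso_discretePUnit {x y : Discrete PUnit.{w+1}} (g : x ⟶ y) : IsIso g :=
  ⟨⟨⟨⟨g.1.1.symm⟩⟩, Subsingleton.elim _ _, Subsingleton.elim _ _⟩⟩

end CommaFin

section Groupoids

variable {M₁ M₂ T : Type*} [Groupoid M₁] [Groupoid M₂] [Groupoid T] (R : M₁ ⥤ T) (L : M₂ ⥤ T)

def commaOut (X : Comma R L) :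
    (Σ Y : Comma R L, X ⟶ Y) ≃ (Σ b : M₁, X.left ⟶ b) × (Σ b : M₂, X.right ⟶ b) where
  toFun p := (⟨p.1.left, p.2.left⟩, ⟨p.1.right, p.2.right⟩)
  invFun q := ⟨⟨q.1.1, q.2.1, Groupoid.inv (R.map q.1.2) ≫ X.hom ≫ L.map q.2.2⟩,
    ⟨q.1.2, q.2.2, by simp⟩⟩
  left_inv := by
    rintro ⟨⟨b₁, b₂, u⟩, ⟨m₁, m₂, w⟩⟩
    dsimp only at m₁ m₂ w
    have hu : Groupoid.inv (R.map m₁) ≫ X.hom ≫ L.map m₂ = u := by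
      rw [← w]; simp
    subst hu
    rfl
  right_inv q := rfl

def costrOut (d : T) (X : CostructuredArrow R d) :
    (Σ Y : CostructuredArrow R d, X ⟶ Y) ≃ (Σ b : M₁, X.left ⟶ b) where
  toFun p := ⟨p.1.left, p.2.left⟩
  invFun q := ⟨CostructuredArrow.mk (Groupoid.inv (R.map q.2) ≫ X.hom),
    CostructuredArrow.homMk q.2 (by simp)⟩
  left_inv := by
    rintro ⟨⟨b, ⟨⟨⟩⟩, u⟩, ⟨m₁, m₂, w⟩⟩
    dsimp only at m₁ m₂ w
    have hu : Groupoid.inv (R.map m₁) ≫ X.hom = u := by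
      have w' : R.map m₁ ≫ u = X.hom := by simpa using w
      rw [← w']; simp
    subst hu
    rfl
  right_inv q := rfl

def strOut (d : T) (X : StructuredArrow d L) :
    (Σ Y : StructuredArrow d L, X ⟶ Y) ≃ (Σ b : M₂, X.right ⟶ b) where
  toFun p := ⟨p.1.right, p.2.right⟩
  invFun q := ⟨StructuredArrow.mk (X.hom ≫ L.map q.2),
    StructuredArrow.homMk q.2 rfl⟩
  left_inv := by
    rintro ⟨⟨⟨⟨⟩⟩, b, u⟩, ⟨m₁, m₂, w⟩⟩
    dsimp only at m₁ m₂ w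
    have hu : X.hom ≫ L.map m₂ = u := by simpa using w.symm
    subst hu
    rfl
  right_inv q := rfl

def commaObjEquiv : Comma R L ≃ Σ p : M₁ × M₂, (R.obj p.1 ⟶ L.obj p.2) where
  toFun X := ⟨(X.left, X.right), X.hom⟩
  invFun p := ⟨p.1.1, p.1.2, p.2⟩
  left_inv X := rfl
  right_inv p := rfl

def costrObjEquiv (d : T) : CostructuredArrow R d ≃ Σ a : M₁, (R.obj a ⟶ d) where
  toFun X := ⟨X.left, X.hom⟩
  invFun p := CostructuredArrow.mk p.2
  left_inv X := rfl
  right_inv p := rfl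

def strObjEquiv (d : T) : StructuredArrow d L ≃ Σ b : M₂, (d ⟶ L.obj b) where
  toFun X := ⟨X.right, X.hom⟩
  invFun p := StructuredArrow.mk p.2
  left_inv X := rfl
  right_inv p := rfl

end Groupoids

instance discPUnitHomFinite (x y : Discrete PUnit.{1}) : Finite (x ⟶ y) :=
  inferInstanceAs (Finite (ULift (PLift _)))

section GroupoidsFin

variable {M₁ M₂ T : Type*} [Groupoid M₁] [Groupoid M₂] [Groupoid T]
  [Finite M₁] [∀ a b : M₁, Finite (a ⟶ b)]
  [Finite M₂] [∀ a b : M₂, Finite (a ⟶ b)]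
  [Finite T] [∀ a b : T, Finite (a ⟶ b)]

lemma gcard_comma (R : M₁ ⥤ T) (L : M₂ ⥤ T) :
    gcard (Comma R L) = ∑ᶠ p : M₁ × M₂, (Nat.card (R.obj p.1 ⟶ L.obj p.2) : ℚ) *
      ((Nat.card (Σ b : M₁, p.1 ⟶ b) : ℚ) * (Nat.card (Σ b : M₂, p.2 ⟶ b) : ℚ))⁻¹ := by
  letI : Fintype M₁ := Fintype.ofFinite _
  letI : Fintype M₂ := Fintype.ofFinite _
  letI : ∀ (a : M₁) (b : M₂), Fintype (R.obj a ⟶ L.obj b) := fun _ _ => Fintype.ofFinite _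
  letI : Fintype (Comma R L) := Fintype.ofFinite _
  rw [gcard_eq_sum_inv_card
    (fun {X Y} f => isIso_comma_aux R L (fun g => inferInstance) (fun g => inferInstance) f)]
  rw [finsum_eq_sum_of_fintype, finsum_eq_sum_of_fintype]
  have h1 : (∑ X : Comma R L, (Nat.card (Σ Y : Comma R L, X ⟶ Y) : ℚ)⁻¹)
      = ∑ q : Σ p : M₁ × M₂, (R.obj p.1 ⟶ L.obj p.2),
          ((Nat.card (Σ b : M₁, q.1.1 ⟶ b) : ℚ) * (Nat.card (Σ b : M₂, q.1.2 ⟶ b) : ℚ))⁻¹ :=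
    Fintype.sum_equiv (commaObjEquiv R L) _ _ (fun X => by
      rw [Nat.card_congr (commaOut R L X), Nat.card_prod]
      push_cast
      rfl)
  rw [h1, ← Finset.univ_sigma_univ, Finset.sum_sigma]
  refine Finset.sum_congr rfl fun p _ => ?_
  dsimp only
  rw [Finset.sum_const, nsmul_eq_mul, Finset.card_univ, ← Nat.card_eq_fintype_card]

lemma gcard_costr (R : M₁ ⥤ T) (d : T) :
    gcard (CostructuredArrow R d) = ∑ᶠ a : M₁, (Nat.card (R.obj a ⟶ d) : ℚ) *
      (Nat.card (Σ b : M₁, a ⟶ b) : ℚ)⁻¹ := by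
  letI : Fintype M₁ := Fintype.ofFinite _
  letI : ∀ a : M₁, Fintype (R.obj a ⟶ d) := fun _ => Fintype.ofFinite _
  haveI : Finite (CostructuredArrow R d) := commaFinite R (Functor.fromPUnit d)
  haveI : ∀ X Y : CostructuredArrow R d, Finite (X ⟶ Y) :=
    fun X Y => commaHomFinite R (Functor.fromPUnit d) X Y
  letI : Fintype (CostructuredArrow R d) := Fintype.ofFinite _
  rw [gcard_eq_sum_inv_card (C := CostructuredArrow R d)
    (fun {X Y} f => isIso_comma_aux R (Functor.fromPUnit d)
      (fun g => inferInstance) (fun g => isIso_discretePUnit g) f)]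
  rw [finsum_eq_sum_of_fintype, finsum_eq_sum_of_fintype]
  have h1 : (∑ X : CostructuredArrow R d, (Nat.card (Σ Y : CostructuredArrow R d, X ⟶ Y) : ℚ)⁻¹)
      = ∑ q : Σ a : M₁, (R.obj a ⟶ d), (Nat.card (Σ b : M₁, q.1 ⟶ b) : ℚ)⁻¹ :=
    Fintype.sum_equiv (costrObjEquiv R d) _ _ (fun X => by
      rw [Nat.card_congr (costrOut R d X)]
      rfl)
  rw [h1, ← Finset.univ_sigma_univ, Finset.sum_sigma]
  refine Finset.sum_congr rfl fun a _ => ?_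
  dsimp only
  rw [Finset.sum_const, nsmul_eq_mul, Finset.card_univ, ← Nat.card_eq_fintype_card]

lemma gcard_str (L : M₂ ⥤ T) (d : T) :
    gcard (StructuredArrow d L) = ∑ᶠ b : M₂, (Nat.card (d ⟶ L.obj b) : ℚ) *
      (Nat.card (Σ c : M₂, b ⟶ c) : ℚ)⁻¹ := by
  letI : Fintype M₂ := Fintype.ofFinite _
  letI : ∀ b : M₂, Fintype (d ⟶ L.obj b) := fun _ => Fintype.ofFinite _
  haveI : Finite (StructuredArrow d L) := commaFinite (Functor.fromPUnit d) L
  haveI : ∀ X Y : StructuredArrow d L, Finite (X ⟶ Y) :=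
    fun X Y => commaHomFinite (Functor.fromPUnit d) L X Y
  letI : Fintype (StructuredArrow d L) := Fintype.ofFinite _
  rw [gcard_eq_sum_inv_card (C := StructuredArrow d L)
    (fun {X Y} f => isIso_comma_aux (Functor.fromPUnit d) L
      (fun g => isIso_discretePUnit g) (fun g => inferInstance) f)]
  rw [finsum_eq_sum_of_fintype, finsum_eq_sum_of_fintype]
  have h1 : (∑ X : StructuredArrow d L, (Nat.card (Σ Y : StructuredArrow d L, X ⟶ Y) : ℚ)⁻¹)
      = ∑ q : Σ b : M₂, (d ⟶ L.obj b), (Nat.card (Σ c : M₂, q.1 ⟶ c) : ℚ)⁻¹ :=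
    Fintype.sum_equiv (strObjEquiv L d) _ _ (fun X => by
      rw [Nat.card_congr (strOut L d X)]
      rfl)
  rw [h1, ← Finset.univ_sigma_univ, Finset.sum_sigma]
  refine Finset.sum_congr rfl fun b _ => ?_
  dsimp only
  rw [Finset.sum_const, nsmul_eq_mul, Finset.card_univ, ← Nat.card_eq_fintype_card]

end GroupoidsFin

section Key

variable {T : Type*} [Groupoid T] [Finite T] [∀ a b : T, Finite (a ⟶ b)]

lemma key_sum (x y : T) :
    letI : Fintype (Pi0 T) := Fintype.ofFinite _
    ∑ d : Pi0 T, (Nat.card (x ⟶ Quotient.out d) : ℚ) *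
        (Nat.card (Aut (Quotient.out d)) : ℚ)⁻¹ * (Nat.card (Quotient.out d ⟶ y) : ℚ)
      = (Nat.card (x ⟶ y) : ℚ) := by
  letI : Fintype (Pi0 T) := Fintype.ofFinite _
  have hiso : ∀ {a b : T} (f : a ⟶ b), IsIso f := fun f => inferInstance
  refine Eq.trans (Fintype.sum_eq_single (⟦x⟧ : Pi0 T) fun d hd => ?_) ?_
  · have he : IsEmpty (x ⟶ Quotient.out d) := by
      rw [← not_nonempty_iff]
      intro hne
      exact hd (((pi0_eq_iff hiso x _).2 hne).trans (Quotient.out_eq d)).symm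
    haveI := he
    rw [Nat.card_of_isEmpty]
    push_cast
    ring
  · obtain ⟨e⟩ := iso_out (⟦x⟧ : Pi0 T) x rfl
    by_cases h : Nonempty (x ⟶ y)
    · have hy : (⟦x⟧ : Pi0 T) = ⟦y⟧ := (pi0_eq_iff hiso x y).2 h
      obtain ⟨e'⟩ := iso_out (⟦x⟧ : Pi0 T) y hy.symm
      have c1 : Nat.card (x ⟶ Quotient.out (⟦x⟧ : Pi0 T))
          = Nat.card (Aut (Quotient.out (⟦x⟧ : Pi0 T))) :=
        (Nat.card_congr (Iso.homCongr e.symm (Iso.refl _))).trans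
          (Nat.card_congr (Groupoid.isoEquivHom _ _)).symm
      have c2 : Nat.card (Quotient.out (⟦x⟧ : Pi0 T) ⟶ y)
          = Nat.card (Aut (Quotient.out (⟦x⟧ : Pi0 T))) :=
        (Nat.card_congr (Iso.homCongr (Iso.refl _) e'.symm)).trans
          (Nat.card_congr (Groupoid.isoEquivHom _ _)).symm
      have c3 : Nat.card (x ⟶ y) = Nat.card (Aut (Quotient.out (⟦x⟧ : Pi0 T))) :=
        (Nat.card_congr (Iso.homCongr e.symm e'.symm)).trans
          (Nat.card_congr (Groupoid.isoEquivHom _ _)).symm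
      rw [c1, c2, c3]
      have hA : (Nat.card (Aut (Quotient.out (⟦x⟧ : Pi0 T))) : ℚ) ≠ 0 := by
        have h0 : 0 < Nat.card (Aut (Quotient.out (⟦x⟧ : Pi0 T))) := Nat.card_pos
        exact_mod_cast h0.ne'
      rw [mul_inv_cancel₀ hA, one_mul]
    · have hne : IsEmpty (x ⟶ y) := not_nonempty_iff.1 h
      have c2 : Nat.card (Quotient.out (⟦x⟧ : Pi0 T) ⟶ y) = 0 := by
        rw [Nat.card_congr (Iso.homCongr e (Iso.refl y))]
        exact Nat.card_of_isEmpty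
      haveI := hne
      rw [c2, Nat.card_of_isEmpty (α := x ⟶ y)]
      push_cast
      ring

end Key

end GcardAux

/-- For a cospan of finite groupoids `M₁ ⟶R T ⟵L M₂`, the Euler characteristic of the
homotopy pullback `M₁ ×_T M₂` (the comma category of `R` and `L`, whose objects are triples
`(a₁, t : R a₁ ⟶ L a₂, a₂)`) is
`χ(M₁ ×_T M₂) = ∑_{d ∈ π₀(T)} χ(M₁/d) · |Aut_T(d)|⁻¹ · χ(d\M₂)`,
where `M₁/d` is the right homotopy fibre of `R` over `d` (the costructured arrow category)
and `d\M₂` is the left homotopy fibre of `L` over `d` (the structured arrow category). -/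
theorem stmt0 {M₁ M₂ T : Type*} [Groupoid M₁] [Groupoid M₂] [Groupoid T]
    [Finite M₁] [∀ a b : M₁, Finite (a ⟶ b)]
    [Finite M₂] [∀ a b : M₂, Finite (a ⟶ b)]
    [Finite T] [∀ a b : T, Finite (a ⟶ b)]
    (R : M₁ ⥤ T) (L : M₂ ⥤ T) :
    gcard (Comma R L) =
      ∑ᶠ d : Pi0 T,
        gcard (CostructuredArrow R (Quotient.out d)) *
          (Nat.card (Aut (Quotient.out d)) : ℚ)⁻¹ *
          gcard (StructuredArrow (Quotient.out d) L) := by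
  classical
  letI : Fintype M₁ := Fintype.ofFinite _
  letI : Fintype M₂ := Fintype.ofFinite _
  letI : Fintype (Pi0 T) := Fintype.ofFinite _
  letI : ∀ (a : M₁) (b : M₂), Fintype (R.obj a ⟶ L.obj b) := fun _ _ => Fintype.ofFinite _
  rw [GcardAux.gcard_comma R L]
  simp only [GcardAux.gcard_costr R, GcardAux.gcard_str L]
  simp only [finsum_eq_sum_of_fintype]
  rw [Fintype.sum_prod_type]
  symm
  rw [Finset.sum_comm]
  simp only [Finset.sum_mul, Finset.mul_sum]
  rw [Finset.sum_comm]
  refine Finset.sum_congr rfl fun b _ => ?_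
  rw [Finset.sum_comm]
  refine Finset.sum_congr rfl fun a _ => ?_
  rw [← GcardAux.key_sum (R.obj a) (L.obj b), Finset.sum_mul]
  refine Finset.sum_congr rfl fun d _ => ?_
  rw [mul_inv]
  ring

end
end

section
/- Let (M₁, L₁, R₁, ε₁) and (M₂, L₂, R₂, ε₂) be composable G-spans (V₁ = H₂), let d be an object of T, and let a₁, a₂ be objects of M₁, M₂ such that R₁a₁ and L₂a₂ lie in the same connected component of T as d, and let g ∈ G. Then the composition map (t₁,t₂) ↦ t₂ ∘ t₁ from the set of pairs (t₁,t₂) ∈ T(R₁a₁, d) × T(d, L₂a₂) with (ε₂(a₂)·H₂(t₂))·(V₁(t₁)·ε₁(a₁)) = g onto the set {t ∈ T(R₁a₁, L₂a₂) : ε₂(a₂)·V₁(t)·ε₁(a₁) = g} is surjective and every fibre has exactly |Aut_T(d)| elements; in particular every morphism t : R₁a₁ → L₂a₂ admits exactly |Aut_T(d)| factorizations t = t₂ ∘ t₁ through d. -/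
/-!
In a groupoid a factorization `t = t₁ ≫ t₂` through `d` is determined by `t₁ : a ⟶ d`, since
`t₂ = inv t₁ ≫ t`, and the weight `ε₂ · V(t₂) · V(t₁) · ε₁` depends only on the composite `t`.
So every fibre of the composition map is in bijection with `a ⟶ d`, which is nonempty and has
`|Aut d|` elements as soon as `a ≅ d`.
-/

open CategoryTheory

noncomputable section

/-- A functor into the one-object groupoid `BG`, identified with an assignment of elements
of `G` to morphisms (composition goes to multiplication in reverse order, matching the
convention `f ≫ g ↦ g·f` of `BG`). -/
structure GFunctor (S : Type*) [Category S] (G : Type*) [Group G] where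
  map : ∀ {a b : S}, (a ⟶ b) → G
  map_id : ∀ a : S, map (𝟙 a) = 1
  map_comp : ∀ {a b c : S} (f : a ⟶ b) (g : b ⟶ c), map (f ≫ g) = map g * map f

/-- The two-sided homotopy fibre `c\M/d` of a span `S ⟵L M ⟶R T`: objects are triples
`(s, a, t)` with `s : c ⟶ L a` and `t : R a ⟶ d`; morphisms are morphisms `m : a₁ ⟶ a₂`
of `M` with `L m ∘ s₁ = s₂` and `t₂ ∘ R m = t₁`. -/
abbrev TwoFibre {S T M : Type*} [Category S] [Category T] [Category M]
    (L : M ⥤ S) (R : M ⥤ T) (c : S) (d : T) :=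
  StructuredArrow c (CostructuredArrow.proj R d ⋙ L)

/-- The induced function `c\ε/d` on the two-sided homotopy fibre:
`(s,a,t) ↦ V(t)·ε(a)·H(s)`. -/
def twoEps {S T M : Type*} [Category S] [Category T] [Category M]
    {G : Type*} [Group G] (H : GFunctor S G) (V : GFunctor T G)
    (L : M ⥤ S) (R : M ⥤ T) (ε : M → G) {c : S} {d : T}
    (x : TwoFibre L R c d) : G :=
  V.map x.right.hom * ε x.right.left * H.map x.hom

/-- The matrix `[M, ε] : π₀(S) × π₀(T) → ℚG` of a `G`-span:
`[M,ε](c,d) = |Aut_T(d)|⁻¹ · ∑_{g ∈ G} χ((c\M/d){c\ε/d = g}) · g`. -/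
noncomputable def spanMatrix {S T M : Type*} [Category S] [Category T] [Category M]
    {G : Type*} [CommGroup G] [Fintype G]
    (H : GFunctor S G) (V : GFunctor T G)
    (L : M ⥤ S) (R : M ⥤ T) (ε : M → G)
    (c : Pi0 S) (d : Pi0 T) : MonoidAlgebra ℚ G :=
  ∑ g : G, MonoidAlgebra.single g
    ((Nat.card (Aut (Quotient.out d)) : ℚ)⁻¹ *
      gcard (ObjectProperty.FullSubcategory
        (fun x : TwoFibre L R (Quotient.out c) (Quotient.out d) =>
          twoEps H V L R ε x = g)))

/-- The composition map `(t₁,t₂) ↦ t₂ ∘ t₁` from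
`{(t₁,t₂) ∈ T(a,d) × T(d,b) : (e₂·V(t₂))·(V(t₁)·e₁) = g}` to
`{t ∈ T(a,b) : e₂·V(t)·e₁ = g}` (here `e₁ = ε₁(a₁)` and `e₂ = ε₂(a₂)`). -/
def compMap {T : Type*} [Groupoid T] {G : Type*} [CommGroup G]
    (V₁ : GFunctor T G) (e₁ e₂ : G) (a b d : T) (g : G) :
    {p : (a ⟶ d) × (d ⟶ b) // e₂ * V₁.map p.2 * (V₁.map p.1 * e₁) = g} →
      {t : a ⟶ b // e₂ * V₁.map t * e₁ = g} :=
  fun p => ⟨p.1.1 ≫ p.1.2, by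
    have h := p.2
    rw [V₁.map_comp]
    simpa [mul_assoc] using h⟩

section Groupoid

variable {T : Type*} [Groupoid T]

def factorizationsEquiv {a b d : T} (t : a ⟶ b) :
    {p : (a ⟶ d) × (d ⟶ b) // p.1 ≫ p.2 = t} ≃ (a ⟶ d) where
  toFun p := p.1.1
  invFun t₁ := ⟨(t₁, inv t₁ ≫ t), by simp⟩
  left_inv := by
    rintro ⟨⟨t₁, t₂⟩, rfl⟩
    simp
  right_inv _ := rfl

theorem natCard_hom_eq_natCard_aut {a d : T} (φ : a ≅ d) :
    Nat.card (a ⟶ d) = Nat.card (Aut d) :=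
  Nat.card_congr ((φ.homCongr (Iso.refl d)).trans (Groupoid.isoEquivHom d d).symm)

end Groupoid

theorem GFunctor.mul_map_mul_map_mul {S : Type*} [Category S] {G : Type*} [Group G]
    (V : GFunctor S G) (e₁ e₂ : G) {a b c : S} (f : a ⟶ b) (h : b ⟶ c) :
    e₂ * V.map h * (V.map f * e₁) = e₂ * V.map (f ≫ h) * e₁ := by
  rw [V.map_comp, mul_assoc, mul_assoc, mul_assoc]

def compMapFiberEquiv {T : Type*} [Groupoid T] {G : Type*} [CommGroup G]
    (V : GFunctor T G) (e₁ e₂ : G) {a b : T} (d : T) (g : G)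
    (t : {t : a ⟶ b // e₂ * V.map t * e₁ = g}) :
    {p // compMap V e₁ e₂ a b d g p = t} ≃ {p : (a ⟶ d) × (d ⟶ b) // p.1 ≫ p.2 = t.1} where
  toFun p := ⟨p.1.1, congrArg Subtype.val p.2⟩
  invFun q := ⟨⟨q.1, by rw [V.mul_map_mul_map_mul, q.2]; exact t.2⟩, Subtype.ext q.2⟩
  left_inv _ := rfl
  right_inv _ := rfl

/-- For composable `G`-spans `(M₁,L₁,R₁,ε₁) : (S₁,H₁) → (T,V₁)` and
`(M₂,L₂,R₂,ε₂) : (T,V₁) → (S₂,V₂)`, an object `d` of `T`, and objects `a₁` of `M₁`,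
`a₂` of `M₂` with `R₁a₁` and `L₂a₂` in the same connected component of `T` as `d`,
and every `g ∈ G`: the composition map
`(t₁,t₂) ↦ t₂∘t₁ : {(t₁,t₂) : (ε₂(a₂)·V₁(t₂))·(V₁(t₁)·ε₁(a₁)) = g}
  → {t : R₁a₁ ⟶ L₂a₂ : ε₂(a₂)·V₁(t)·ε₁(a₁) = g}`
is surjective and each of its fibres has exactly `|Aut_T(d)|` elements; in particular every
`t : R₁a₁ ⟶ L₂a₂` admits exactly `|Aut_T(d)|` factorizations `t = t₂ ∘ t₁` through `d`. -/
theorem stmt4 {S₁ T S₂ M₁ M₂ : Type*}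
    [Groupoid S₁] [Groupoid T] [Groupoid S₂] [Groupoid M₁] [Groupoid M₂]
    [Finite S₁] [∀ a b : S₁, Finite (a ⟶ b)]
    [Finite T] [∀ a b : T, Finite (a ⟶ b)]
    [Finite S₂] [∀ a b : S₂, Finite (a ⟶ b)]
    [Finite M₁] [∀ a b : M₁, Finite (a ⟶ b)]
    [Finite M₂] [∀ a b : M₂, Finite (a ⟶ b)]
    {G : Type*} [CommGroup G] [Fintype G]
    (H₁ : GFunctor S₁ G) (V₁ : GFunctor T G) (V₂ : GFunctor S₂ G)
    (L₁ : M₁ ⥤ S₁) (R₁ : M₁ ⥤ T) (L₂ : M₂ ⥤ T) (R₂ : M₂ ⥤ S₂)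
    (ε₁ : M₁ → G) (ε₂ : M₂ → G)
    (hε₁ : ∀ {a b : M₁} (m : a ⟶ b), ε₁ b * H₁.map (L₁.map m) = V₁.map (R₁.map m) * ε₁ a)
    (hε₂ : ∀ {a b : M₂} (m : a ⟶ b), ε₂ b * V₁.map (L₂.map m) = V₂.map (R₂.map m) * ε₂ a)
    (d : T) (a₁ : M₁) (a₂ : M₂)
    (h₁ : Nonempty (R₁.obj a₁ ≅ d)) (h₂ : Nonempty (L₂.obj a₂ ≅ d)) (g : G) :
    Function.Surjective (compMap V₁ (ε₁ a₁) (ε₂ a₂) (R₁.obj a₁) (L₂.obj a₂) d g) ∧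
      (∀ b : {t : R₁.obj a₁ ⟶ L₂.obj a₂ // ε₂ a₂ * V₁.map t * ε₁ a₁ = g},
        Nat.card {p // compMap V₁ (ε₁ a₁) (ε₂ a₂) (R₁.obj a₁) (L₂.obj a₂) d g p = b} =
          Nat.card (Aut d)) ∧
      ∀ t : R₁.obj a₁ ⟶ L₂.obj a₂,
        Nat.card {p : (R₁.obj a₁ ⟶ d) × (d ⟶ L₂.obj a₂) // p.1 ≫ p.2 = t} =
          Nat.card (Aut d) := by
  obtain ⟨φ⟩ := h₁
  have fiberEquiv := fun t : {t : R₁.obj a₁ ⟶ L₂.obj a₂ // ε₂ a₂ * V₁.map t * ε₁ a₁ = g} ↦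
    (compMapFiberEquiv V₁ (ε₁ a₁) (ε₂ a₂) d g t).trans (factorizationsEquiv t.1)
  refine ⟨fun t ↦ ?_, fun t ↦ ?_, fun t ↦ ?_⟩
  · exact ⟨_, ((fiberEquiv t).symm φ.hom).2⟩
  · rw [Nat.card_congr (fiberEquiv t), natCard_hom_eq_natCard_aut φ]
  · rw [Nat.card_congr (factorizationsEquiv t), natCard_hom_eq_natCard_aut φ]

end
end

section
/- Let φ : S → T be a functor of finite groupoids, H : S → BG and V : T → BG functors, and ε : Ob(S) → G a function with ε(a₂)·H(s) = V(φ s)·ε(a₁) for every morphism s : a₁ → a₂ in S. Then (S, id_S, φ, ε) is a G-span from (S,H) to (T,V), and its matrix is given, for c ∈ π₀(S) and d ∈ π₀(T), by [(φ,ε)_*](c,d) = (1/|Aut_T(d)|) · Σ_{g∈G} |{t ∈ T(φ(c), d) : V(t)·ε(c) = g}| · g in ℚG. -/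
open CategoryTheory

noncomputable section

/-! For the span `S ⟵𝟭 S ⟶φ T`, every object `(s, a, t)` of `c\S/d` is isomorphic to
`(𝟙 c, c, t ∘ φ s)`, and since `s` is invertible there is at most one morphism between two
objects; so `c\S/d` is the discrete groupoid on `T(φ c, d)`. Naturality of `ε` gives
`c\ε/d (s, a, t) = V(t ∘ φ s)·ε(c)`, hence `(c\S/d){c\ε/d = g}` is the discrete groupoid on
`{t : V(t)·ε(c) = g}`, whose groupoid cardinality is its number of elements. -/

open ObjectProperty

theorem gcard_eq_natCard_pi0 (C : Type*) [Category C] [Finite (Pi0 C)]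
    (h : ∀ x : C, Subsingleton (x ⟶ x)) : gcard C = Nat.card (Pi0 C) := by
  have : Fintype (Pi0 C) := Fintype.ofFinite _
  have hAut (x : C) : Nat.card (Aut x) = 1 :=
    Nat.card_eq_one_iff_unique.2 ⟨⟨fun i j => Iso.ext ((h x).elim _ _)⟩, ⟨Iso.refl x⟩⟩
  simp [gcard, finsum_eq_sum_of_fintype, hAut]

theorem nonempty_iso_iff_nonempty_iso_obj {C : Type*} [Category C] {P : ObjectProperty C}
    (x y : P.FullSubcategory) : Nonempty (x ≅ y) ↔ Nonempty (x.obj ≅ y.obj) :=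
  ⟨fun ⟨e⟩ => ⟨P.ι.mapIso e⟩, fun ⟨e⟩ => ⟨isoMk _ e⟩⟩

section IdentitySpan

variable {S T : Type*} [Groupoid S] [Category T] (φ : S ⥤ T) {c : S} {d : T}

def fibreComposite (x : TwoFibre (𝟭 S) φ c d) : φ.obj c ⟶ d :=
  φ.map x.hom ≫ x.right.hom

def fibreMk (t : φ.obj c ⟶ d) : TwoFibre (𝟭 S) φ c d :=
  StructuredArrow.mk (Y := CostructuredArrow.mk t) (𝟙 c)

theorem fibreComposite_fibreMk (t : φ.obj c ⟶ d) : fibreComposite φ (fibreMk φ t) = t := by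
  change φ.map (𝟙 c) ≫ t = t
  simp

def fibreMkIso (x : TwoFibre (𝟭 S) φ c d) : fibreMk φ (fibreComposite φ x) ≅ x :=
  StructuredArrow.isoMk (CostructuredArrow.isoMk (Groupoid.isoEquivHom _ _ |>.symm x.hom) rfl)
    (Category.id_comp _)

instance : Quiver.IsThin (TwoFibre (𝟭 S) φ c d) := fun x _ =>
  ⟨fun f g => StructuredArrow.hom_ext _ _ <| CostructuredArrow.hom_ext _ _ <|
    (cancel_epi x.hom).1 ((StructuredArrow.w f).trans (StructuredArrow.w g).symm)⟩

theorem fibreComposite_eq_of_hom {x y : TwoFibre (𝟭 S) φ c d} (f : x ⟶ y) :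
    fibreComposite φ x = fibreComposite φ y := by
  have hS : x.hom ≫ f.right.left = y.hom := StructuredArrow.w f
  have hT : φ.map f.right.left ≫ y.right.hom = x.right.hom := CostructuredArrow.w f.right
  rw [fibreComposite, fibreComposite, ← hS, ← hT]
  exact (φ.map_comp_assoc _ _ _).symm

theorem nonempty_iso_iff_fibreComposite_eq (x y : TwoFibre (𝟭 S) φ c d) :
    Nonempty (x ≅ y) ↔ fibreComposite φ x = fibreComposite φ y :=
  ⟨fun ⟨e⟩ => fibreComposite_eq_of_hom φ e.hom,
    fun h => ⟨(fibreMkIso φ x).symm ≪≫ eqToIso (by rw [h]) ≪≫ fibreMkIso φ y⟩⟩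

def pi0FibreEquiv (Q : (φ.obj c ⟶ d) → Prop) :
    Pi0 (FullSubcategory fun x : TwoFibre (𝟭 S) φ c d => Q (fibreComposite φ x)) ≃
      {t // Q t} :=
  let f (z : FullSubcategory fun x : TwoFibre (𝟭 S) φ c d => Q (fibreComposite φ x)) :
      {t // Q t} := ⟨fibreComposite φ z.obj, z.property⟩
  have hf : Function.Surjective f := fun t =>
    ⟨⟨fibreMk φ t.1, (fibreComposite_fibreMk φ t.1).symm ▸ t.2⟩,
      Subtype.ext (fibreComposite_fibreMk φ t.1)⟩
  (Quotient.congrRight fun x y =>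
      (nonempty_iso_iff_nonempty_iso_obj x y).trans <|
        (nonempty_iso_iff_fibreComposite_eq φ x.obj y.obj).trans
          ⟨fun h => Subtype.ext h, congrArg Subtype.val⟩).trans
    (Setoid.quotientKerEquivOfSurjective f hf)

theorem gcard_fibre (Q : (φ.obj c ⟶ d) → Prop) [Finite (φ.obj c ⟶ d)] :
    gcard (FullSubcategory fun x : TwoFibre (𝟭 S) φ c d => Q (fibreComposite φ x)) =
      Nat.card {t // Q t} := by
  have := Finite.of_equiv _ (pi0FibreEquiv φ Q).symm
  refine (gcard_eq_natCard_pi0 _ fun z => ⟨fun f g => hom_ext _ (Subsingleton.elim _ _)⟩).trans ?_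
  rw [Nat.card_congr (pi0FibreEquiv φ Q)]

theorem twoEps_identitySpan {G : Type*} [Group G] (H : GFunctor S G) (V : GFunctor T G)
    {ε : S → G} (hε : ∀ {a b : S} (s : a ⟶ b), ε b * H.map s = V.map (φ.map s) * ε a)
    (x : TwoFibre (𝟭 S) φ c d) :
    twoEps H V (𝟭 S) φ ε x = V.map (fibreComposite φ x) * ε c := by
  rw [twoEps, fibreComposite, V.map_comp (φ.map x.hom) x.right.hom, mul_assoc, mul_assoc]
  exact congrArg _ (hε x.hom)

end IdentitySpan

/-- For a functor `φ : S ⥤ T` of finite groupoids with `H : S → BG`, `V : T → BG` and a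
natural transformation `ε : H ⟹ V∘φ` (a function `ε : Ob(S) → G` with
`ε(a₂)·H(s) = V(φ s)·ε(a₁)` for every `s : a₁ ⟶ a₂`), the data `(S, 𝟭 S, φ, ε)` is a
`G`-span from `(S,H)` to `(T,V)` and its matrix is
`[(φ,ε)_*](c,d) = |Aut_T(d)|⁻¹ · ∑_{g∈G} |{t ∈ T(φ(c),d) : V(t)·ε(c) = g}| · g`. -/
theorem stmt5 {S T : Type*} [Groupoid S] [Groupoid T]
    [Finite S] [∀ a b : S, Finite (a ⟶ b)]
    [Finite T] [∀ a b : T, Finite (a ⟶ b)]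
    {G : Type*} [CommGroup G] [Fintype G]
    (φ : S ⥤ T) (H : GFunctor S G) (V : GFunctor T G) (ε : S → G)
    (hε : ∀ {a b : S} (s : a ⟶ b), ε b * H.map s = V.map (φ.map s) * ε a) :
    (∀ {a b : S} (m : a ⟶ b),
        ε b * H.map ((𝟭 S).map m) = V.map (φ.map m) * ε a) ∧
      ∀ (c : Pi0 S) (d : Pi0 T),
        spanMatrix H V (𝟭 S) φ ε c d =
          ∑ g : G, MonoidAlgebra.single g
            ((Nat.card (Aut (Quotient.out d)) : ℚ)⁻¹ *
              (Nat.card {t : φ.obj (Quotient.out c) ⟶ Quotient.out d //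
                V.map t * ε (Quotient.out c) = g} : ℚ)) := by
  refine ⟨fun m => hε m, fun c d => Finset.sum_congr rfl fun g _ => ?_⟩
  have hfibre : (fun x : TwoFibre (𝟭 S) φ c.out d.out => twoEps H V (𝟭 S) φ ε x = g) =
      fun x => V.map (fibreComposite φ x) * ε c.out = g :=
    funext fun x => by rw [twoEps_identitySpan φ H V hε]
  rw [hfibre, gcard_fibre φ fun t => V.map t * ε c.out = g]

end
end

section
/- Let φ : S → T be a functor of finite groupoids, H : S → BG and V : T → BG functors, and ε : Ob(S) → G a function with ε(a₂)·H(s) = V(φ s)·ε(a₁) for every morphism s : a₁ → a₂ in S. Then (S, φ, id_S, ε⁻¹) is a G-span from (T,V) to (S,H) (with function a ↦ ε(a)⁻¹), and its matrix is given, for d ∈ π₀(T) and c ∈ π₀(S), by [(φ,ε⁻¹)^*](d,c) = (1/|Aut_S(c)|) · Σ_{g∈G} |{t ∈ T(d, φ(c)) : ε(c)⁻¹·V(t) = g}| · g in ℚG. -/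
/-! The two-sided fibre `d\S/c` of the span `T ⟵φ S ⟶𝟭 S` is thin, and its object
`(t : d ⟶ φ a, s : a ⟶ c)` is determined up to isomorphism by the composite
`t ≫ φ s : d ⟶ φ c` (since `s` is invertible); every `t : d ⟶ φ c` arises, as
`(t, 𝟙 c)`. Naturality of `ε` turns `d\ε⁻¹/c` into `ε(c)⁻¹·V(t ≫ φ s)`, so
`(d\S/c){δ = g}` is equivalent to the discrete groupoid on
`{t : d ⟶ φ c | ε(c)⁻¹·V(t) = g}`, and its groupoid cardinality is the size of that set. -/

open CategoryTheory

noncomputable section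

lemma finsum_one_eq_natCard (α : Type*) {M : Type*} [AddCommMonoidWithOne M] [NeZero (1 : M)] :
    ∑ᶠ _ : α, (1 : M) = Nat.card α := by
  rcases finite_or_infinite α with _ | _
  · have := Fintype.ofFinite α
    simp [finsum_eq_sum_of_fintype, Nat.card_eq_fintype_card]
  · have : (Function.support fun _ : α => (1 : M)).Infinite := by
      rw [Function.support_const one_ne_zero]
      exact Set.infinite_univ
    rw [finsum_of_infinite_support this, Nat.card_eq_zero_of_infinite, Nat.cast_zero]

lemma gcard_eq_natCard_pi0_of_subsingleton {C : Type*} [Category C]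
    (h : ∀ x : C, Subsingleton (x ⟶ x)) : gcard C = Nat.card (Pi0 C) := by
  rw [gcard, ← finsum_one_eq_natCard]
  refine finsum_congr fun x => ?_
  have : Subsingleton (Aut x.out) := ⟨fun a b => Iso.ext ((h _).elim _ _)⟩
  simp [Nat.card_unique]

instance {C : Type*} [Category C] [Quiver.IsThin C] (P : ObjectProperty C) :
    Quiver.IsThin P.FullSubcategory :=
  fun _ _ => ⟨fun _ _ => ObjectProperty.hom_ext _ (Subsingleton.elim _ _)⟩

section Pi0Equiv

variable {C X : Type*} [Category C] (f : C → X)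
  (hf : ∀ x y : C, IsIsomorphic x y ↔ f x = f y) (hs : Function.Surjective f)

def pi0EquivOfIsIsomorphicIff : Pi0 C ≃ X :=
  (Quotient.congrRight hf).trans (Setoid.quotientKerEquivOfSurjective f hs)

def pi0FullSubcategoryEquiv {Q : ObjectProperty C} {P : X → Prop} (hQ : ∀ x, Q x ↔ P (f x)) :
    Pi0 Q.FullSubcategory ≃ Subtype P :=
  pi0EquivOfIsIsomorphicIff (fun x => ⟨f x.obj, (hQ _).1 x.property⟩)
    (fun x y => Q.fullyFaithfulι.isoEquiv.nonempty_congr.trans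
      ((hf _ _).trans Subtype.mk_eq_mk.symm))
    (fun ⟨t, ht⟩ => by
      obtain ⟨x, rfl⟩ := hs t
      exact ⟨⟨x, (hQ x).2 ht⟩, rfl⟩)

end Pi0Equiv

lemma inv_mul_map_eq_map_mul_inv {S T : Type*} [Category S] [Category T] {G : Type*} [Group G]
    (φ : S ⥤ T) (H : GFunctor S G) (V : GFunctor T G) (ε : S → G)
    (hε : ∀ {a b : S} (s : a ⟶ b), ε b * H.map s = V.map (φ.map s) * ε a)
    {a b : S} (m : a ⟶ b) : (ε b)⁻¹ * V.map (φ.map m) = H.map m * (ε a)⁻¹ := by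
  rw [inv_mul_eq_iff_eq_mul, ← mul_assoc, hε m, mul_inv_cancel_right]

section PullbackFibre

variable {S T : Type*} [Groupoid S] [Category T] (φ : S ⥤ T) {d : T} {c : S}

/- `φ.map x.right.hom` sees the source of `x.right.hom` as
`(CostructuredArrow.proj _ c).obj x.right` rather than `(𝟭 S).obj x.right.left`; the two agree
only after unfolding, hence the `erw`s below. -/
def twoFibreComp (x : TwoFibre φ (𝟭 S) d c) : d ⟶ φ.obj c :=
  x.hom ≫ φ.map x.right.hom

instance : Quiver.IsThin (TwoFibre φ (𝟭 S) d c) := fun _ y =>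
  ⟨fun m₁ m₂ => StructuredArrow.hom_ext _ _ <| CostructuredArrow.hom_ext _ _ <|
    (cancel_mono y.right.hom).1 <|
      (CostructuredArrow.w m₁.right).trans (CostructuredArrow.w m₂.right).symm⟩

lemma twoFibreComp_eq_of_hom {x y : TwoFibre φ (𝟭 S) d c} (m : x ⟶ y) :
    twoFibreComp φ x = twoFibreComp φ y := by
  rw [twoFibreComp, twoFibreComp, ← StructuredArrow.w m, ← CostructuredArrow.w m.right]
  erw [φ.map_comp]
  simp only [Category.assoc]
  rfl

def twoFibreHomOfCompEq (x y : TwoFibre φ (𝟭 S) d c)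
    (h : twoFibreComp φ x = twoFibreComp φ y) : x ⟶ y :=
  StructuredArrow.homMk
    (CostructuredArrow.homMk (x.right.hom ≫ Groupoid.inv y.right.hom) (by simp)) (by
      simp only [twoFibreComp] at h
      dsimp
      erw [φ.map_comp, ← Category.assoc, h, Category.assoc, ← φ.map_comp, Groupoid.comp_inv,
        φ.map_id, Category.comp_id])

lemma isIsomorphic_iff_twoFibreComp_eq (x y : TwoFibre φ (𝟭 S) d c) :
    IsIsomorphic x y ↔ twoFibreComp φ x = twoFibreComp φ y :=
  ⟨fun ⟨i⟩ => twoFibreComp_eq_of_hom φ i.hom, fun h =>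
    ⟨⟨twoFibreHomOfCompEq φ x y h, twoFibreHomOfCompEq φ y x h.symm,
      Subsingleton.elim _ _, Subsingleton.elim _ _⟩⟩⟩

lemma twoFibreComp_surjective : Function.Surjective (twoFibreComp φ (d := d) (c := c)) :=
  fun t => ⟨StructuredArrow.mk (Y := CostructuredArrow.mk (𝟙 c)) t, by
    erw [twoFibreComp, φ.map_id, Category.comp_id]; rfl⟩

lemma twoEps_eq_inv_mul_map_twoFibreComp {G : Type*} [Group G] (H : GFunctor S G)
    (V : GFunctor T G) (ε : S → G)
    (hε : ∀ {a b : S} (s : a ⟶ b), ε b * H.map s = V.map (φ.map s) * ε a)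
    (x : TwoFibre φ (𝟭 S) d c) :
    twoEps V H φ (𝟭 S) (fun a => (ε a)⁻¹) x = (ε c)⁻¹ * V.map (twoFibreComp φ x) := by
  rw [twoEps, twoFibreComp, V.map_comp, ← mul_assoc]
  exact congrArg (· * _) (inv_mul_map_eq_map_mul_inv φ H V ε hε x.right.hom).symm

end PullbackFibre

/-- For a functor `φ : S ⥤ T` of finite groupoids with `H : S → BG`, `V : T → BG` and a
natural transformation `ε : H ⟹ V∘φ` (a function `ε : Ob(S) → G` with
`ε(a₂)·H(s) = V(φ s)·ε(a₁)` for every `s : a₁ ⟶ a₂`), the data `(S, φ, 𝟭 S, ε⁻¹)` is a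
`G`-span from `(T,V)` to `(S,H)` and its matrix is
`[(φ,ε⁻¹)^*](d,c) = |Aut_S(c)|⁻¹ · ∑_{g∈G} |{t ∈ T(d,φ(c)) : ε(c)⁻¹·V(t) = g}| · g`. -/
theorem stmt6 {S T : Type*} [Groupoid S] [Groupoid T]
    [Finite S] [∀ a b : S, Finite (a ⟶ b)]
    [Finite T] [∀ a b : T, Finite (a ⟶ b)]
    {G : Type*} [CommGroup G] [Fintype G]
    (φ : S ⥤ T) (H : GFunctor S G) (V : GFunctor T G) (ε : S → G)
    (hε : ∀ {a b : S} (s : a ⟶ b), ε b * H.map s = V.map (φ.map s) * ε a) :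
    (∀ {a b : S} (m : a ⟶ b),
        (ε b)⁻¹ * V.map (φ.map m) = H.map ((𝟭 S).map m) * (ε a)⁻¹) ∧
      ∀ (d : Pi0 T) (c : Pi0 S),
        spanMatrix V H φ (𝟭 S) (fun a => (ε a)⁻¹) d c =
          ∑ g : G, MonoidAlgebra.single g
            ((Nat.card (Aut (Quotient.out c)) : ℚ)⁻¹ *
              (Nat.card {t : Quotient.out d ⟶ φ.obj (Quotient.out c) //
                (ε (Quotient.out c))⁻¹ * V.map t = g} : ℚ)) := by
  refine ⟨inv_mul_map_eq_map_mul_inv φ H V ε hε, fun d c =>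
    Finset.sum_congr rfl fun g _ => ?_⟩
  rw [gcard_eq_natCard_pi0_of_subsingleton fun _ => inferInstance, Nat.card_congr <|
    pi0FullSubcategoryEquiv (twoFibreComp φ) (isIsomorphic_iff_twoFibreComp_eq φ)
      (twoFibreComp_surjective φ) (P := fun t => (ε c.out)⁻¹ * V.map t = g) fun x => by
        rw [twoEps_eq_inv_mul_map_twoFibreComp φ H V ε hε]]

end
end

section
/- Let (M, L, R, ε) be a G-span from (S, H) to (T, V). Then for all c ∈ π₀(S) and d ∈ π₀(T), the matrix entry lies in the corner of the group ring cut out by the averaging idempotents of the automorphism images: [M,ε](c,d) ∈ overline{V(Aut_T(d))} · ℚG · overline{H(Aut_S(c))}, equivalently overline{V(Aut_T(d))}·[M,ε](c,d)·overline{H(Aut_S(c))} = [M,ε](c,d), where overline{U} = |U|⁻¹ Σ_{u∈U} u for a subgroup U of G. -/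
/-!
Automorphisms `fc` of `c` and `fd` of `d` act on the two-sided fibre `c\M/d` by
`(s, a, t) ↦ (fc ≫ s, a, t ≫ fd)`, an autoequivalence multiplying `c\ε/d` by `V(fd)·H(fc)`.
By the span condition the level sets of `c\ε/d` are closed under isomorphism, so it restricts
to an equivalence between the level sets at `g` and at `V(fd)·g·H(fc)`; as groupoid cardinality
is invariant under equivalence, the coefficients of `[M,ε](c,d)` are invariant under translation
by `V(Aut d)` and `H(Aut c)`, and averaging over these sets fixes the entry.
-/

open CategoryTheory

noncomputable section

namespace Pi0

variable {C D : Type*} [Category C] [Category D]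

def mapEquivalence (e : C ≌ D) : Pi0 C ≃ Pi0 D where
  toFun := Quotient.map e.functor.obj fun _ _ ⟨i⟩ => ⟨e.functor.mapIso i⟩
  invFun := Quotient.map e.inverse.obj fun _ _ ⟨i⟩ => ⟨e.inverse.mapIso i⟩
  left_inv := Quotient.ind fun a => Quotient.sound ⟨(e.unitIso.app a).symm⟩
  right_inv := Quotient.ind fun b => Quotient.sound ⟨e.counitIso.app b⟩

lemma card_aut_out_mapEquivalence (e : C ≌ D) (x : Pi0 C) :
    Nat.card (Aut (mapEquivalence e x).out) = Nat.card (Aut x.out) := by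
  have hx : mapEquivalence e x = ⟦e.functor.obj x.out⟧ := by
    conv_lhs => rw [← Quotient.out_eq x]
    rfl
  obtain ⟨i⟩ : Nonempty ((mapEquivalence e x).out ≅ e.functor.obj x.out) := by
    rw [hx]
    exact Quotient.mk_out (s := isIsomorphicSetoid D) _
  rw [Nat.card_congr (Aut.autMulEquivOfIso i).toEquiv]
  exact Nat.card_congr (e.fullyFaithfulFunctor.autMulEquivOfFullyFaithful x.out).toEquiv.symm

end Pi0

lemma gcard_congr {C D : Type*} [Category C] [Category D] (e : C ≌ D) : gcard C = gcard D := by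
  unfold gcard
  rw [← finsum_comp_equiv (Pi0.mapEquivalence e)]
  simp_rw [Pi0.card_aut_out_mapEquivalence]

instance CostructuredArrow.isEquivalence_map {C D : Type*} [Category C] [Category D]
    {F : C ⥤ D} {d d' : D} (f : d ⟶ d') [IsIso f] :
    (CostructuredArrow.map (S := F) f).IsEquivalence :=
  (CostructuredArrow.mapIso (asIso f)).isEquivalence_functor

section TwoFibre

variable {S T M : Type*} [Category S] [Category T] [Category M]
    {G : Type*} [CommGroup G] (H : GFunctor S G) (V : GFunctor T G)
    (L : M ⥤ S) (R : M ⥤ T) (ε : M → G) {c : S} {d : T}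

def TwoFibre.shift (fc : c ≅ c) (fd : d ≅ d) : TwoFibre L R c d ≌ TwoFibre L R c d :=
  (StructuredArrow.mapIso fc.symm).trans
    (StructuredArrow.pre c (CostructuredArrow.map fd.hom)
      (CostructuredArrow.proj R d ⋙ L)).asEquivalence

lemma twoEps_shift (fc : c ≅ c) (fd : d ≅ d) (x : TwoFibre L R c d) :
    twoEps H V L R ε ((TwoFibre.shift L R fc fd).functor.obj x) =
      V.map fd.hom * twoEps H V L R ε x * H.map fc.hom := by
  change V.map (x.right.hom ≫ fd.hom) * ε x.right.left * H.map (fc.hom ≫ x.hom) = _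
  rw [V.map_comp, H.map_comp, twoEps]
  ac_rfl

variable {H V L R ε}

lemma twoEps_eq_of_hom
    (hε : ∀ {a b : M} (m : a ⟶ b), ε b * H.map (L.map m) = V.map (R.map m) * ε a)
    {x y : TwoFibre L R c d} (f : x ⟶ y) : twoEps H V L R ε x = twoEps H V L R ε y := by
  have hH : H.map y.hom = H.map (L.map f.right.left) * H.map x.hom := by
    rw [← StructuredArrow.w f]
    exact H.map_comp _ _
  have hV : V.map x.right.hom = V.map y.right.hom * V.map (R.map f.right.left) := by
    rw [← CostructuredArrow.w f.right]
    exact V.map_comp _ _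
  rw [twoEps, twoEps, hH, hV, mul_assoc (V.map _), ← hε]
  simp only [mul_assoc]

lemma isClosedUnderIsomorphisms_twoEps_eq
    (hε : ∀ {a b : M} (m : a ⟶ b), ε b * H.map (L.map m) = V.map (R.map m) * ε a) (g : G) :
    ObjectProperty.IsClosedUnderIsomorphisms fun x : TwoFibre L R c d =>
      twoEps H V L R ε x = g :=
  ⟨fun e h => (twoEps_eq_of_hom hε e.inv).trans h⟩

lemma gcard_twoEps_shift
    (hε : ∀ {a b : M} (m : a ⟶ b), ε b * H.map (L.map m) = V.map (R.map m) * ε a)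
    (fc : c ≅ c) (fd : d ≅ d) (g : G) :
    gcard (ObjectProperty.FullSubcategory fun x : TwoFibre L R c d =>
        twoEps H V L R ε x = V.map fd.hom * g * H.map fc.hom) =
      gcard (ObjectProperty.FullSubcategory fun x : TwoFibre L R c d =>
        twoEps H V L R ε x = g) := by
  have := isClosedUnderIsomorphisms_twoEps_eq (c := c) (d := d) hε
    (V.map fd.hom * g * H.map fc.hom)
  refine (gcard_congr ((TwoFibre.shift L R fc fd).congrFullSubcategory ?_)).symm
  ext x
  simp [twoEps_shift]

end TwoFibre

lemma MonoidAlgebra.of_mul_sum_single_mul_of {k G : Type*} [Semiring k] [Group G] [Fintype G]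
    (f : G → k) (u w : G) (hf : ∀ g, f (u * g * w) = f g) :
    of k G u * (∑ g, single g (f g)) * of k G w = ∑ g, single g (f g) := by
  simp only [Finset.mul_sum, Finset.sum_mul, of_apply, single_mul_single, one_mul, mul_one]
  exact Fintype.sum_equiv ((Equiv.mulLeft u).trans (Equiv.mulRight w)) _ _ fun g => by
    simp [hf]

lemma average_mul_mul_average_eq_self {A ι κ : Type*} [Semiring A] [Algebra ℚ A]
    [Finite ι] [Nonempty ι] [Finite κ] [Nonempty κ] (f : ι → A) (g : κ → A) {x : A}
    (h : ∀ i j, f i * x * g j = x) :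
    ((Nat.card ι : ℚ)⁻¹ • ∑ᶠ i, f i) * x * ((Nat.card κ : ℚ)⁻¹ • ∑ᶠ j, g j) = x := by
  have := Fintype.ofFinite ι
  have := Fintype.ofFinite κ
  have hsum : (∑ i, f i) * x * ∑ j, g j = ((Nat.card κ : ℚ) * Nat.card ι) • x := by
    simp only [Finset.sum_mul, Finset.mul_sum, h, Finset.sum_const, Finset.card_univ,
      Nat.card_eq_fintype_card, mul_smul, Nat.cast_smul_eq_nsmul]
  have hι : (Nat.card ι : ℚ) ≠ 0 := Nat.cast_ne_zero.mpr Nat.card_pos.ne'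
  have hκ : (Nat.card κ : ℚ) ≠ 0 := Nat.cast_ne_zero.mpr Nat.card_pos.ne'
  rw [finsum_eq_sum_of_fintype, finsum_eq_sum_of_fintype, smul_mul_assoc, smul_mul_assoc,
    mul_smul_comm, hsum, smul_smul, smul_smul]
  field_simp
  exact one_smul ℚ x

/-- For a `G`-span `(M,L,R,ε)` from `(S,H)` to `(T,V)`, every matrix entry lies in the
corner of the group ring cut out by the averaging idempotents
`overline{V(Aut_T(d))}` and `overline{H(Aut_S(c))}`:
`overline{V(Aut_T(d))}·[M,ε](c,d)·overline{H(Aut_S(c))} = [M,ε](c,d)`,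
where `overline{U} = |U|⁻¹ ∑_{u∈U} u`. -/
theorem stmt9 {S T M : Type*} [Groupoid S] [Groupoid T] [Groupoid M]
    [Finite S] [∀ a b : S, Finite (a ⟶ b)]
    [Finite T] [∀ a b : T, Finite (a ⟶ b)]
    [Finite M] [∀ a b : M, Finite (a ⟶ b)]
    {G : Type*} [CommGroup G] [Fintype G]
    (H : GFunctor S G) (V : GFunctor T G)
    (L : M ⥤ S) (R : M ⥤ T) (ε : M → G)
    (hε : ∀ {a b : M} (m : a ⟶ b), ε b * H.map (L.map m) = V.map (R.map m) * ε a)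
    (c : Pi0 S) (d : Pi0 T) :
    ((Nat.card (Set.range fun f : Aut (Quotient.out d) => V.map f.hom) : ℚ)⁻¹ •
          ∑ᶠ u : Set.range (fun f : Aut (Quotient.out d) => V.map f.hom),
            MonoidAlgebra.of ℚ G (u : G)) *
        spanMatrix H V L R ε c d *
        ((Nat.card (Set.range fun f : Aut (Quotient.out c) => H.map f.hom) : ℚ)⁻¹ •
          ∑ᶠ u : Set.range (fun f : Aut (Quotient.out c) => H.map f.hom),
            MonoidAlgebra.of ℚ G (u : G)) =
      spanMatrix H V L R ε c d := by
  refine average_mul_mul_average_eq_self _ _ ?_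
  rintro ⟨_, fd, rfl⟩ ⟨_, fc, rfl⟩
  exact MonoidAlgebra.of_mul_sum_single_mul_of _ _ _ fun g => by
    rw [gcard_twoEps_shift hε fc fd g]

end
end

section
/- Let S →H BG ←V T be a cospan of finite groupoids over BG. The homotopy pullback S ×_BG T, with legs the projections p₁ : S ×_BG T → S and p₂ : S ×_BG T → T and with ε(x,k,y) = k ∈ G for each object (x,k,y), is a G-span from (S,H) to (T,V), and its matrix is the constant function [S ×_BG T, ε](c,d) = (1/|Aut_T(d)|)·Σ_{g∈G} g = (|G|/|Aut_T(d)|)·overline{G} for all c ∈ π₀(S), d ∈ π₀(T), where overline{G} = |G|⁻¹ Σ_{g∈G} g ∈ ℚG. -/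
open CategoryTheory

noncomputable section

/-- The homotopy pullback `S ×_BG T`: objects are triples `(x, k, y)` with `k ∈ G`. -/
structure GPullback {S T : Type*} [Category S] [Category T] {G : Type*} [Group G]
    (H : GFunctor S G) (V : GFunctor T G) where
  x : S
  k : G
  y : T

/-- Morphisms `(x₁,k₁,y₁) ⟶ (x₂,k₂,y₂)` of `S ×_BG T`: pairs `(s,t)` with
`k₂·H(s) = V(t)·k₁`. -/
@[ext] structure GPullbackHom {S T : Type*} [Category S] [Category T] {G : Type*} [Group G]
    {H : GFunctor S G} {V : GFunctor T G} (A B : GPullback H V) where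
  s : A.x ⟶ B.x
  t : A.y ⟶ B.y
  comm : B.k * H.map s = V.map t * A.k

instance GPullback.category {S T : Type*} [Category S] [Category T] {G : Type*} [Group G]
    (H : GFunctor S G) (V : GFunctor T G) : Category (GPullback H V) where
  Hom A B := GPullbackHom A B
  id A := ⟨𝟙 A.x, 𝟙 A.y, by rw [H.map_id, V.map_id, mul_one, one_mul]⟩
  comp {A B C} f g := ⟨f.s ≫ g.s, f.t ≫ g.t, by
    rw [H.map_comp, V.map_comp, ← mul_assoc, g.comm, mul_assoc, f.comm, ← mul_assoc]⟩

/-- First projection `S ×_BG T ⥤ S`. -/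
def GPullback.fst {S T : Type*} [Category S] [Category T] {G : Type*} [Group G]
    (H : GFunctor S G) (V : GFunctor T G) : GPullback H V ⥤ S where
  obj A := A.x
  map f := f.s

/-- Second projection `S ×_BG T ⥤ T`. -/
def GPullback.snd {S T : Type*} [Category S] [Category T] {G : Type*} [Group G]
    (H : GFunctor S G) (V : GFunctor T G) : GPullback H V ⥤ T where
  obj A := A.y
  map f := f.t

/-!
Every level set `(c\M/d){c\ε/d = g}` of the two-sided fibre of `M = S ×_BG T` is contractible.
A morphism `(s₁, (x₁,k₁,y₁), t₁) ⟶ (s₂, (x₂,k₂,y₂), t₂)` of the fibre is forced to be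
`(s₂ s₁⁻¹, t₂⁻¹ t₁)`, and this pair is a morphism of `S ×_BG T` exactly when both objects have
the same value under `c\ε/d`; the level `g` contains `(1_c, (c,g,d), 1_d)`. Hence each level
has groupoid cardinality `1`.
-/

lemma GFunctor.map_inv {S : Type*} [Groupoid S] {G : Type*} [Group G]
    (H : GFunctor S G) {a b : S} (f : a ⟶ b) :
    H.map (Groupoid.inv f) = (H.map f)⁻¹ :=
  eq_inv_of_mul_eq_one_left (by rw [← H.map_comp, Groupoid.comp_inv, H.map_id])

lemma gcard_eq_one_of_subsingleton_of_nonempty_hom (C : Type*) [Category C] [Nonempty C]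
    (hsub : ∀ A B : C, Subsingleton (A ⟶ B)) (hne : ∀ A B : C, Nonempty (A ⟶ B)) :
    gcard C = 1 := by
  obtain ⟨A⟩ := ‹Nonempty C›
  have : Unique (Pi0 C) :=
    { default := Quotient.mk _ A
      uniq := Quotient.ind fun B => Quotient.sound
        ⟨⟨(hne B A).some, (hne A B).some, (hsub B B).elim _ _, (hsub A A).elim _ _⟩⟩ }
  have hAut : ∀ X : C, Nat.card (Aut X) = 1 := fun X =>
    Nat.card_eq_one_iff_unique.mpr ⟨⟨fun f g => Iso.ext ((hsub X X).elim _ _)⟩, ⟨Iso.refl X⟩⟩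
  rw [gcard, finsum_unique, hAut, Nat.cast_one, inv_one]

namespace GPullback

section

variable {S T : Type*} [Category S] [Category T] {G : Type*} [Group G]
  (H : GFunctor S G) (V : GFunctor T G)

def twoFibreMk (c : S) (g : G) (d : T) : TwoFibre (fst H V) (snd H V) c d :=
  StructuredArrow.mk (Y := CostructuredArrow.mk (Y := (⟨c, g, d⟩ : GPullback H V)) (𝟙 d)) (𝟙 c)

lemma twoEps_twoFibreMk (c : S) (g : G) (d : T) :
    twoEps H V (fst H V) (snd H V) (fun A => A.k) (twoFibreMk H V c g d) = g := by
  change V.map (𝟙 d) * g * H.map (𝟙 c) = g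
  rw [V.map_id, H.map_id, one_mul, mul_one]

end

variable {S T : Type*} [Groupoid S] [Groupoid T] {G : Type*} [Group G]
  {H : GFunctor S G} {V : GFunctor T G} {c : S} {d : T}

lemma twoFibre_hom_subsingleton (x y : TwoFibre (fst H V) (snd H V) c d) :
    Subsingleton (x ⟶ y) := by
  refine ⟨fun f f' => StructuredArrow.hom_ext _ _ (CostructuredArrow.hom_ext _ _ ?_)⟩
  apply GPullbackHom.ext
  · exact (cancel_epi x.hom).mp ((StructuredArrow.w f).trans (StructuredArrow.w f').symm)
  · exact (cancel_mono y.right.hom).mp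
      ((CostructuredArrow.w f.right).trans (CostructuredArrow.w f'.right).symm)

lemma twoFibre_nonempty_hom_of_twoEps_eq {x y : TwoFibre (fst H V) (snd H V) c d}
    (h : twoEps H V (fst H V) (snd H V) (fun A => A.k) x =
      twoEps H V (fst H V) (snd H V) (fun A => A.k) y) :
    Nonempty (x ⟶ y) := by
  have comm : y.right.left.k * H.map (Groupoid.inv x.hom ≫ y.hom) =
      V.map (x.right.hom ≫ Groupoid.inv y.right.hom) * x.right.left.k := by
    rw [H.map_comp, V.map_comp, H.map_inv, V.map_inv, mul_assoc, eq_inv_mul_iff_mul_eq,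
      ← mul_assoc, ← mul_assoc]
    exact mul_inv_eq_of_eq_mul h.symm
  exact ⟨StructuredArrow.homMk (CostructuredArrow.homMk
    ⟨Groupoid.inv x.hom ≫ y.hom, x.right.hom ≫ Groupoid.inv y.right.hom, comm⟩
    (by
      show (x.right.hom ≫ Groupoid.inv y.right.hom) ≫ y.right.hom = x.right.hom; simp)) (by
      show x.hom ≫ Groupoid.inv x.hom ≫ y.hom = y.hom; simp)⟩

variable (H V) in
lemma gcard_twoEps_levelSet_eq_one (c : S) (d : T) (g : G) :
    gcard (ObjectProperty.FullSubcategory fun x : TwoFibre (fst H V) (snd H V) c d =>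
      twoEps H V (fst H V) (snd H V) (fun A => A.k) x = g) = 1 :=
  have : Nonempty (ObjectProperty.FullSubcategory fun x : TwoFibre (fst H V) (snd H V) c d =>
      twoEps H V (fst H V) (snd H V) (fun A => A.k) x = g) :=
    ⟨⟨twoFibreMk H V c g d, twoEps_twoFibreMk H V c g d⟩⟩
  gcard_eq_one_of_subsingleton_of_nonempty_hom _
    (fun x y => ⟨fun f f' => ObjectProperty.hom_ext _
      ((twoFibre_hom_subsingleton x.obj y.obj).elim f.hom f'.hom)⟩)
    (fun x y => (twoFibre_nonempty_hom_of_twoEps_eq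
      (x.property.trans y.property.symm)).map ObjectProperty.homMk)

end GPullback

/-- For a cospan of finite groupoids over `BG` given by `H : S → BG` and `V : T → BG`, the
homotopy pullback `S ×_BG T` (objects `(x,k,y)`, `k ∈ G`; morphisms `(s,t)` with
`k₂·H(s) = V(t)·k₁`), with legs the projections and `ε(x,k,y) = k`, is a `G`-span from
`(S,H)` to `(T,V)`, and its matrix is the constant function
`[S ×_BG T, ε](c,d) = |Aut_T(d)|⁻¹ · ∑_{g∈G} g`. -/
theorem stmt12 {S T : Type*} [Groupoid S] [Groupoid T]
    [Finite S] [∀ a b : S, Finite (a ⟶ b)]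
    [Finite T] [∀ a b : T, Finite (a ⟶ b)]
    {G : Type*} [CommGroup G] [Fintype G]
    (H : GFunctor S G) (V : GFunctor T G) :
    (∀ (A B : GPullback H V) (m : A ⟶ B),
        B.k * H.map ((GPullback.fst H V).map m) =
          V.map ((GPullback.snd H V).map m) * A.k) ∧
      ∀ (c : Pi0 S) (d : Pi0 T),
        spanMatrix H V (GPullback.fst H V) (GPullback.snd H V) (fun A => A.k) c d =
          ∑ g : G, MonoidAlgebra.single g
            ((Nat.card (Aut (Quotient.out d)) : ℚ)⁻¹) := by
  refine ⟨fun A B m => m.comm, fun c d => ?_⟩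
  unfold spanMatrix
  refine Finset.sum_congr rfl fun g _ => ?_
  rw [GPullback.gcard_twoEps_levelSet_eq_one, mul_one]

end
end

section
/- Let G be a finite abelian group, H : S → G and V : T → G homomorphisms from finite groups S and T, and let M be a subset of G invariant under the action x·(s,t) = V(t)⁻¹·x·H(s) of S × T on G. Let M//(S×T) be the action groupoid with object set M and morphisms x₁ → x₂ the pairs (s,t) ∈ S × T with V(t)·x₁ = x₂·H(s). Then M//(S×T), with legs the functors to BS and BT sending (s,t) to s and to t respectively, and with ε : M ↪ G the inclusion, is a G-span from (BS, BH) to (BT, BV), and its matrix has single entry [M//(S×T), ε](•,•) = (1/|T|)·Σ_{x∈M} x in ℚG. -/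
/-!
Over the unique objects of `BS` and `BT`, an object of the two-sided fibre of `M//(S×T)` is a
triple `(s, x, t)`, and a morphism between two of them is forced to be the pair `(s', t')`
carrying the outer arrows into each other. So the fibre is thin, and two triples are connected
exactly when their values `V(t)·x·H(s)` agree. Each level `{c\ε/d = g}` is therefore contractible
(groupoid cardinality `1`) when `g ∈ M` and, by invariance of `M`, empty otherwise; dividing by
`|Aut_{BT}(•)| = |T|` gives the entry `|T|⁻¹ · ∑_{x∈M} x`.
-/

open CategoryTheory

noncomputable section

/-- A right action of a group `K` on a set `X`. -/
structure RightAction (K X : Type*) [Group K] where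
  act : X → K → X
  act_one : ∀ x, act x 1 = x
  act_mul : ∀ x a b, act x (a * b) = act (act x a) b

/-- The action groupoid of an invariant subset `{x : X // P x}` of a right `K`-set `X`:
objects are the elements satisfying `P`, and morphisms `x₁ ⟶ x₂` are the elements `k ∈ K`
with `x₂ · k = x₁`. -/
structure ActionGroupoid {K X : Type*} [Group K] (ρ : RightAction K X) (P : X → Prop) where
  pt : X
  mem : P pt

instance ActionGroupoid.groupoid {K X : Type*} [Group K] (ρ : RightAction K X)
    (P : X → Prop) : Groupoid (ActionGroupoid ρ P) where
  Hom x y := {k : K // ρ.act y.pt k = x.pt}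
  id x := ⟨1, ρ.act_one _⟩
  comp {x y z} f g := ⟨g.1 * f.1, by rw [ρ.act_mul, g.2, f.2]⟩
  id_comp f := Subtype.ext (mul_one _)
  comp_id f := Subtype.ext (one_mul _)
  assoc f g h := Subtype.ext (mul_assoc h.1 g.1 f.1).symm
  inv {x y} f := ⟨f.1⁻¹, by
    have h : ρ.act (ρ.act y.pt f.1) f.1⁻¹ = y.pt := by
      rw [← ρ.act_mul]; simp [ρ.act_one]
    rw [f.2] at h; exact h⟩
  inv_comp f := Subtype.ext (by simp)
  comp_inv f := Subtype.ext (by simp)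

/-- The one-object groupoid `BK` of a group `K`. -/
structure BGrp (K : Type*) : Type where
  star ::

instance BGrp.groupoid (K : Type*) [Group K] : Groupoid (BGrp K) where
  Hom _ _ := K
  id _ := 1
  comp f g := g * f
  id_comp f := mul_one f
  comp_id f := one_mul f
  assoc f g h := (mul_assoc h g f).symm
  inv f := f⁻¹
  inv_comp f := by simp
  comp_inv f := by simp

/-- The functor `BK → BG` induced by a group homomorphism `K → G`. -/
def GFunctor.ofHom {K G : Type*} [Group K] [Group G] (φ : K →* G) :
    GFunctor (BGrp K) G where
  map f := φ f
  map_id _ := map_one φ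
  map_comp f g := map_mul φ g f

variable {G S T : Type*} [CommGroup G] [Group S] [Group T]

/-- The right action `x·(s,t) = V(t)⁻¹·x·H(s)` of `S × T` on `G`. -/
def spanRA (H : S →* G) (V : T →* G) : RightAction (S × T) G where
  act x p := (V p.2)⁻¹ * x * H p.1
  act_one x := by simp
  act_mul x a b := by simp [map_mul, mul_inv_rev, mul_assoc]

/-- The left leg `M//(S×T) ⥤ BS`, `(s,t) ↦ s`. -/
def agFst (H : S →* G) (V : T →* G) (M : Set G) :
    ActionGroupoid (spanRA H V) (· ∈ M) ⥤ BGrp S where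
  obj _ := ⟨⟩
  map f := f.1.1
  map_id _ := rfl
  map_comp _ _ := rfl

/-- The right leg `M//(S×T) ⥤ BT`, `(s,t) ↦ t`. -/
def agSnd (H : S →* G) (V : T →* G) (M : Set G) :
    ActionGroupoid (spanRA H V) (· ∈ M) ⥤ BGrp T where
  obj _ := ⟨⟩
  map f := f.1.2
  map_id _ := rfl
  map_comp _ _ := rfl

lemma BGrp.card_aut {K : Type*} [Group K] (X : BGrp K) : Nat.card (Aut X) = Nat.card K :=
  Nat.card_congr (Groupoid.isoEquivHom X X)

lemma gcard_of_isEmpty (C : Type*) [Category C] [IsEmpty C] : gcard C = 0 := by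
  have : IsEmpty (Pi0 C) := Quotient.instIsEmpty
  rw [gcard, finsum_of_isEmpty]

lemma gcard_eq_one_of_isThin (C : Type*) [Category C] [Quiver.IsThin C] [Nonempty C]
    (hconn : ∀ X Y : C, Nonempty (X ⟶ Y)) : gcard C = 1 := by
  have : Subsingleton (Pi0 C) := ⟨Quotient.ind₂ fun X Y =>
    Quotient.sound ⟨⟨(hconn X Y).some, (hconn Y X).some, Subsingleton.elim _ _,
      Subsingleton.elim _ _⟩⟩⟩
  obtain ⟨X₀⟩ := ‹Nonempty C›
  have : Unique (Pi0 C) := uniqueOfSubsingleton (Quotient.mk _ X₀)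
  have : ∀ X : C, Unique (Aut X) := fun X =>
    ⟨⟨Iso.refl X⟩, fun _ => Iso.ext (Subsingleton.elim _ _)⟩
  rw [gcard, finsum_unique, Nat.card_unique, Nat.cast_one, inv_one]

instance ObjectProperty.FullSubcategory.isThin {C : Type*} [Category C] [Quiver.IsThin C]
    (P : ObjectProperty C) : Quiver.IsThin P.FullSubcategory :=
  fun _ _ => ⟨fun _ _ => InducedCategory.hom_ext (Subsingleton.elim _ _)⟩

lemma spanRA_act_eq_iff_span_condition (H : S →* G) (V : T →* G) {x₁ x₂ : G} {p : S × T} :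
    (spanRA H V).act x₂ p = x₁ ↔ x₂ * H p.1 = V p.2 * x₁ := by
  show (V p.2)⁻¹ * x₂ * H p.1 = x₁ ↔ _
  rw [mul_assoc, inv_mul_eq_iff_eq_mul]

section Fibre

variable (H : S →* G) (V : T →* G) (M : Set G) (c₀ : BGrp S) (d₀ : BGrp T)

local notation "Fib" => TwoFibre (agFst H V M) (agSnd H V M) c₀ d₀

local notation "ε" => twoEps (GFunctor.ofHom H) (GFunctor.ofHom V) (agFst H V M)
  (agSnd H V M) ActionGroupoid.pt

/-- A morphism of the fibre is determined by its `S`-component via the left arrows and by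
its `T`-component via the right arrows. -/
instance twoFibre_isThin : Quiver.IsThin Fib := fun X Y => ⟨fun f g => by
  have hS : f.right.left.1.1 * X.hom = g.right.left.1.1 * X.hom :=
    (StructuredArrow.w f).trans (StructuredArrow.w g).symm
  have hT : Y.right.hom * f.right.left.1.2 = Y.right.hom * g.right.left.1.2 :=
    (CostructuredArrow.w f.right).trans (CostructuredArrow.w g.right).symm
  exact StructuredArrow.hom_ext _ _ (CostructuredArrow.hom_ext _ _ (Subtype.ext
    (Prod.ext (mul_right_cancel hS) (mul_left_cancel hT))))⟩

lemma twoFibre_nonempty_hom_of_twoEps_eq (X Y : Fib) (h : ε X = ε Y) : Nonempty (X ⟶ Y) := by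
  have h' : V Y.right.hom * Y.right.left.pt * H Y.hom =
      V X.right.hom * X.right.left.pt * H X.hom := h.symm
  refine ⟨StructuredArrow.homMk (CostructuredArrow.homMk
      ⟨(Y.hom * X.hom⁻¹, Y.right.hom⁻¹ * X.right.hom), ?_⟩ ?_) ?_⟩
  · show (V (Y.right.hom⁻¹ * X.right.hom))⁻¹ * Y.right.left.pt * H (Y.hom * X.hom⁻¹) =
      X.right.left.pt
    simp only [map_mul, map_inv]
    calc _ = (V X.right.hom)⁻¹ * (V Y.right.hom * Y.right.left.pt * H Y.hom) *
          (H X.hom)⁻¹ := by group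
      _ = X.right.left.pt := by rw [h']; group
  · show Y.right.hom * (Y.right.hom⁻¹ * X.right.hom) = X.right.hom
    group
  · show Y.hom * X.hom⁻¹ * X.hom = Y.hom
    group

variable {H V M} in
lemma twoEps_mem (hM : ∀ x ∈ M, ∀ (s : S) (t : T), (V t)⁻¹ * x * H s ∈ M) (X : Fib) :
    ε X ∈ M := by
  have := hM _ X.right.left.mem X.hom X.right.hom⁻¹
  rwa [map_inv, inv_inv] at this

lemma gcard_twoEps_level [DecidablePred (· ∈ M)]
    (hM : ∀ x ∈ M, ∀ (s : S) (t : T), (V t)⁻¹ * x * H s ∈ M) (g : G) :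
    gcard (ObjectProperty.FullSubcategory fun X : Fib => ε X = g) = if g ∈ M then 1 else 0 := by
  split_ifs with hg
  · have : Nonempty (ObjectProperty.FullSubcategory fun X : Fib => ε X = g) :=
      ⟨⟨StructuredArrow.mk (Y := CostructuredArrow.mk
        (Y := (⟨g, hg⟩ : ActionGroupoid (spanRA H V) (· ∈ M))) (1 : T)) (1 : S),
        by show V 1 * g * H 1 = g; simp⟩⟩
    exact gcard_eq_one_of_isThin _ fun X Y => ⟨ObjectProperty.homMk <|
      (twoFibre_nonempty_hom_of_twoEps_eq H V M c₀ d₀ _ _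
        (X.property.trans Y.property.symm)).some⟩
  · have : IsEmpty (ObjectProperty.FullSubcategory fun X : Fib => ε X = g) :=
      ⟨fun X => hg (X.property ▸ twoEps_mem c₀ d₀ hM X.obj)⟩
    exact gcard_of_isEmpty _

end Fibre

theorem stmt13_general [Fintype G]
    (H : S →* G) (V : T →* G) (M : Set G)
    (hM : ∀ x ∈ M, ∀ (s : S) (t : T), (V t)⁻¹ * x * H s ∈ M) :
    (∀ (A B : ActionGroupoid (spanRA H V) (· ∈ M)) (m : A ⟶ B),
        B.pt * (GFunctor.ofHom H).map ((agFst H V M).map m) =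
          (GFunctor.ofHom V).map ((agSnd H V M).map m) * A.pt) ∧
      ∀ (c : Pi0 (BGrp S)) (d : Pi0 (BGrp T)),
        spanMatrix (GFunctor.ofHom H) (GFunctor.ofHom V)
            (agFst H V M) (agSnd H V M) (fun A => A.pt) c d =
          (Nat.card T : ℚ)⁻¹ • ∑ᶠ x : M, MonoidAlgebra.of ℚ G (x : G) := by
  classical
  refine ⟨fun A B m => (spanRA_act_eq_iff_span_condition H V).1 m.2, fun c d => ?_⟩
  simp only [spanMatrix, gcard_twoEps_level H V M _ _ hM, BGrp.card_aut, mul_ite, mul_one,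
    mul_zero]
  rw [finsum_eq_sum_of_fintype, Finset.smul_sum]
  calc _ = ∑ x ∈ Finset.univ.filter (· ∈ M),
        (Nat.card T : ℚ)⁻¹ • MonoidAlgebra.of ℚ G x := by
        rw [Finset.sum_filter]
        refine Finset.sum_congr rfl fun x _ => ?_
        split_ifs <;> simp
    _ = _ := Finset.sum_subtype _ (by simp) _

/-- Let `G` be a finite abelian group, `H : S →* G`, `V : T →* G` homomorphisms from finite
groups, and `M ⊆ G` invariant under the action `x·(s,t) = V(t)⁻¹·x·H(s)` of `S × T` on `G`.
Then the action groupoid `M//(S×T)` — objects `M`, morphisms `x₁ ⟶ x₂` the pairs `(s,t)`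
with `V(t)·x₁ = x₂·H(s)` — with legs `(s,t) ↦ s` to `BS` and `(s,t) ↦ t` to `BT` and with
`ε : M ↪ G` the inclusion, is a `G`-span from `(BS,BH)` to `(BT,BV)`, and its matrix has
single entry `[M//(S×T), ε](•,•) = |T|⁻¹ · ∑_{x∈M} x ∈ ℚG`. -/
theorem stmt13 [Fintype G] [Finite S] [Finite T]
    (H : S →* G) (V : T →* G) (M : Set G)
    (hM : ∀ x ∈ M, ∀ (s : S) (t : T), (V t)⁻¹ * x * H s ∈ M) :
    (∀ (A B : ActionGroupoid (spanRA H V) (· ∈ M)) (m : A ⟶ B),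
        B.pt * (GFunctor.ofHom H).map ((agFst H V M).map m) =
          (GFunctor.ofHom V).map ((agSnd H V M).map m) * A.pt) ∧
      ∀ (c : Pi0 (BGrp S)) (d : Pi0 (BGrp T)),
        spanMatrix (GFunctor.ofHom H) (GFunctor.ofHom V)
            (agFst H V M) (agSnd H V M) (fun A => A.pt) c d =
          (Nat.card T : ℚ)⁻¹ • ∑ᶠ x : M, MonoidAlgebra.of ℚ G (x : G) :=
  stmt13_general H V M hM

end
end
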